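/- Let (P,≻,q) be a problem and k > 1. If the constrained Boston mechanism β^k is not manipulable at (P,≻,q), then β^k(P,≻,q) is stable at (P,≻,q). -/

import Mathlib

/-!
School choice framework following Bonkoungou–Nesterov,
"Reforms meet fairness concerns in school and college admissions".

Students `I` and schools `S` are finite types with `|I| > |S|`.
A strict preference relation of a student over `S ∪ {∅}` is represented by a list
of `Option S` containing every element exactly once (earlier = more preferred);
`none` is the outside option.  A strict priority order of a school is a list of
`I` containing every student exactly once (earlier = higher priority).
-/

namespace SchoolChoice

variable {I S : Type*} [Fintype I] [DecidableEq I] [Fintype S] [DecidableEq S]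

/-- `p` is a strict preference relation on `S ∪ {∅}`: a ranking list containing every
element of `Option S` exactly once. -/
def ValidPref (p : List (Option S)) : Prop := p.Nodup ∧ ∀ x : Option S, x ∈ p

/-- `pr` is a strict priority order: a ranking list containing every student exactly once. -/
def ValidPrio (pr : List I) : Prop := pr.Nodup ∧ ∀ i : I, i ∈ pr

/-- `a` is strictly preferred to `b` under the preference relation `p`. -/
def prefLt (p : List (Option S)) (a b : Option S) : Prop := p.idxOf a < p.idxOf b

/-- `i` has strictly higher priority than `j` under the priority order `pr`. -/
def prioLt (pr : List I) (i j : I) : Prop := pr.idxOf i < pr.idxOf j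

instance (p : List (Option S)) (a b : Option S) : Decidable (prefLt p a b) :=
  inferInstanceAs (Decidable (_ < _))

instance (pr : List I) (i j : I) : Decidable (prioLt pr i j) :=
  inferInstanceAs (Decidable (_ < _))

/-- The acceptable schools of `p` (those preferred to the outside option), in preference
order. -/
def acceptables (p : List (Option S)) : List S := (p.takeWhile Option.isSome).filterMap id

/-- The truncation of `p` after its `k`-th acceptable school: the preference relation
listing, in the same order, only the `min k _` most-preferred acceptable schools of `p`,
all other schools being unacceptable (kept below `none` in their original order). -/
def truncate (p : List (Option S)) (k : ℕ) : List (Option S) :=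
  ((acceptables p).take k).map some ++
    none :: p.filter (fun x => decide (x ≠ none ∧ x ∉ ((acceptables p).take k).map some))

/-- `μ` is a matching: it respects the capacities `q`. -/
def IsMatching (q : S → ℕ) (μ : I → Option S) : Prop :=
  ∀ s : S, (Finset.univ.filter (fun i => μ i = some s)).card ≤ q s

/-- The pair `(i, s)` blocks `μ` under the problem `(P, prio, q)`. -/
def Blocks (P : I → List (Option S)) (prio : S → List I) (q : S → ℕ)
    (μ : I → Option S) (i : I) (s : S) : Prop :=
  prefLt (P i) (some s) (μ i) ∧
    ((Finset.univ.filter (fun j => μ j = some s)).card < q s ∨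
      ∃ j : I, μ j = some s ∧ prioLt (prio s) i j)

/-- `i` is a blocking student for `μ` under `(P, prio, q)`. -/
def BlockingStudent (P : I → List (Option S)) (prio : S → List I) (q : S → ℕ)
    (μ : I → Option S) (i : I) : Prop :=
  ∃ s : S, Blocks P prio q μ i s

/-- `μ` is individually rational under `P`. -/
def IndividuallyRational (P : I → List (Option S)) (μ : I → Option S) : Prop :=
  ∀ i : I, ¬ prefLt (P i) none (μ i)

/-- `μ` is stable at `(P, prio, q)`. -/
def IsStable (P : I → List (Option S)) (prio : S → List I) (q : S → ℕ)
    (μ : I → Option S) : Prop :=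
  IndividuallyRational P μ ∧ ∀ i : I, ¬ BlockingStudent P prio q μ i

/-- The number of blocking students for `μ` under `(P, prio, q)`. -/
noncomputable def numBlocking (P : I → List (Option S)) (prio : S → List I) (q : S → ℕ)
    (μ : I → Option S) : ℕ :=
  {i : I | BlockingStudent P prio q μ i}.ncard

/-! ### The Gale–Shapley student-proposing deferred acceptance mechanism

The state `σ : I → ℕ` records, for each student, how many of her acceptable schools
have already rejected her; she currently applies to the `σ i`-th school on her list
(if any).  At each round every school tentatively keeps the `q s` highest-priority
students among its current applicants and rejects the rest, who move on. -/

/-- The school student `i` currently applies to. -/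
def daTarget (P : I → List (Option S)) (σ : I → ℕ) (i : I) : Option S :=
  (acceptables (P i))[σ i]?

/-- The students tentatively held by school `s`: the `q s` highest-priority current
applicants. -/
def daHeld (P : I → List (Option S)) (prio : S → List I) (q : S → ℕ)
    (σ : I → ℕ) (s : S) : List I :=
  ((prio s).filter (fun i => decide (daTarget P σ i = some s))).take (q s)

/-- One round of deferred acceptance: every rejected student moves to her next choice. -/
def daStep (P : I → List (Option S)) (prio : S → List I) (q : S → ℕ)
    (σ : I → ℕ) : I → ℕ := fun i =>
  match daTarget P σ i with
  | none => σ i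
  | some s => if i ∈ daHeld P prio q σ s then σ i else σ i + 1

/-- The Gale–Shapley (student-proposing deferred acceptance) mechanism.  Iterating the
round map `|I| * |S| + 1` times is guaranteed to reach the terminal state. -/
def GS (P : I → List (Option S)) (prio : S → List I) (q : S → ℕ) : I → Option S :=
  fun i =>
    let σ := (daStep P prio q)^[Fintype.card I * Fintype.card S + 1] (fun _ => 0)
    match daTarget P σ i with
    | none => none
    | some s => if i ∈ daHeld P prio q σ s then some s else none

/-- The constrained Gale–Shapley mechanism `GS^k`. -/
def GSk (k : ℕ) (P : I → List (Option S)) (prio : S → List I) (q : S → ℕ) : I → Option S :=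
  GS (fun i => truncate (P i) k) prio q

/-! ### The Boston (immediate acceptance) mechanism -/

/-- Round `t` of the Boston mechanism: each not-yet-accepted student applies to her
`t`-th ranked acceptable school (0-indexed), and each school permanently accepts, up to
its remaining capacity, its highest-priority new applicants. -/
def bostonRound (P : I → List (Option S)) (prio : S → List I) (q : S → ℕ)
    (μ : I → Option S) (t : ℕ) : I → Option S := fun i =>
  match μ i with
  | some s => some s
  | none =>
    match (acceptables (P i))[t]? with
    | none => none
    | some s =>
      if i ∈ ((prio s).filter
            (fun j => decide (μ j = none ∧ (acceptables (P j))[t]? = some s))).take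
          (q s - (Finset.univ.filter (fun j => μ j = some s)).card)
      then some s else none

/-- The Boston (immediate acceptance) mechanism. -/
def Boston (P : I → List (Option S)) (prio : S → List I) (q : S → ℕ) : I → Option S :=
  (List.range (Fintype.card S)).foldl (bostonRound P prio q) (fun _ => none)

/-- The constrained Boston mechanism `β^k`. -/
def Bostonk (k : ℕ) (P : I → List (Option S)) (prio : S → List I) (q : S → ℕ) :
    I → Option S :=
  Boston (fun i => truncate (P i) k) prio q

/-! ### The first-preference-first mechanism -/

/-- The adjusted priority profile: each first-preference-first school (member of `fpf`)
ranks students first by the rank they assign to it under `P` (counting the ranking of the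
outside option as well), ties broken by the original priority; equal-preference schools
keep their original priority. -/
def fpfPrio (fpf : Finset S) (P : I → List (Option S)) (prio : S → List I) : S → List I :=
  fun s =>
    if s ∈ fpf then
      (List.range (Fintype.card S + 1)).flatMap
        (fun r => (prio s).filter (fun i => decide ((P i).idxOf (some s) = r)))
    else prio s

/-- The first-preference-first mechanism with set `fpf` of first-preference-first
schools: Gale–Shapley run on the adjusted priorities. -/
def FPF (fpf : Finset S) (P : I → List (Option S)) (prio : S → List I) (q : S → ℕ) :
    I → Option S :=
  GS P (fpfPrio fpf P prio) q

/-- The constrained first-preference-first mechanism `FPF^k`. -/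
def FPFk (fpf : Finset S) (k : ℕ) (P : I → List (Option S)) (prio : S → List I)
    (q : S → ℕ) : I → Option S :=
  FPF fpf (fun i => truncate (P i) k) prio q

/-! ### Manipulation and equilibrium notions -/

/-- Student `i` is a manipulating student of the mechanism `φ` (with priorities and
capacities fixed) at the true profile `P`. -/
def ManipulatingStudent (φ : (I → List (Option S)) → I → Option S)
    (P : I → List (Option S)) (i : I) : Prop :=
  ∃ Q : List (Option S), ValidPref Q ∧
    prefLt (P i) (φ (Function.update P i Q) i) (φ P i)

/-- The mechanism `φ` is not manipulable at `P`. -/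
def NotManipulable (φ : (I → List (Option S)) → I → Option S)
    (P : I → List (Option S)) : Prop :=
  ∀ i : I, ¬ ManipulatingStudent φ P i

/-- `P'` is a Nash equilibrium of the game `(φ, P)` in which the sophisticated students
are the members of `M` (who may misreport, and best respond) and all other (sincere)
students report truthfully. -/
def NashEq (φ : (I → List (Option S)) → I → Option S) (P : I → List (Option S))
    (M : Finset I) (P' : I → List (Option S)) : Prop :=
  (∀ i, ValidPref (P' i)) ∧ (∀ i ∉ M, P' i = P i) ∧
    ∀ i ∈ M, ∀ Q : List (Option S), ValidPref Q →
      ¬ prefLt (P i) (φ (Function.update P' i Q) i) (φ P' i)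

/-! ### Semi-sophisticated students -/

/-- Student `i` is guaranteed her first choice `s`: `s` is her most-preferred acceptable
school and `i` is among the `q s` highest-priority students at `s`. -/
def GuaranteedFirstChoice (P : I → List (Option S)) (prio : S → List I) (q : S → ℕ)
    (i : I) (s : S) : Prop :=
  (acceptables (P i)).head? = some s ∧ (prio s).idxOf i < q s

instance (P : I → List (Option S)) (prio : S → List I) (q : S → ℕ) (i : I) (s : S) :
    Decidable (GuaranteedFirstChoice P prio q i s) :=
  inferInstanceAs (Decidable (_ ∧ _))

/-- School `s` is competitive: at least `q s` students are guaranteed their first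
choice `s`. -/
def Competitive (P : I → List (Option S)) (prio : S → List I) (q : S → ℕ) (s : S) : Prop :=
  q s ≤ (Finset.univ.filter (fun i => GuaranteedFirstChoice P prio q i s)).card

instance (P : I → List (Option S)) (prio : S → List I) (q : S → ℕ) (s : S) :
    Decidable (Competitive P prio q s) :=
  inferInstanceAs (Decidable (_ ≤ _))

/-- `P'` is a Nash equilibrium of the game `(GS^ℓ, P)` with semi-sophisticated students:
every student guaranteed her first choice reports truthfully; every other student reports
truthfully if she has at most `ℓ` acceptable schools or all her acceptable schools are
competitive, and otherwise lists as acceptable, in the order given by her true preference,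
only her acceptable schools that are not competitive. -/
def SemiSophProfile (ℓ : ℕ) (P : I → List (Option S)) (prio : S → List I) (q : S → ℕ)
    (P' : I → List (Option S)) : Prop :=
  ∀ i : I,
    ((∃ s : S, GuaranteedFirstChoice P prio q i s) → P' i = P i) ∧
    (¬ (∃ s : S, GuaranteedFirstChoice P prio q i s) →
      (((acceptables (P i)).length ≤ ℓ ∨ ∀ s ∈ acceptables (P i), Competitive P prio q s) →
          P' i = P i) ∧
      (¬ ((acceptables (P i)).length ≤ ℓ ∨
            ∀ s ∈ acceptables (P i), Competitive P prio q s) →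
          acceptables (P' i) =
            (acceptables (P i)).filter (fun s => decide (¬ Competitive P prio q s))))

/-!
If `(i, s)` blocked `β^k(P)`, student `i` could report `s` as her first choice. Then she is
accepted at `s` in the first Boston round, which is a profitable manipulation, unless `s` is
filled in that round by `q s` applicants of higher priority. In the latter case those are the
same students as under truthful reports, because `i`'s report only changes the first-round
applicants to `s` below the top `q s`; and a school filled in the first round keeps its
students to the end, so `(i, s)` cannot block after all. Individual rationality holds because
truncation only removes acceptable schools.
-/

end SchoolChoice

namespace List

variable {α : Type*}

theorem length_take_of_mem_of_notMem_take {l : List α} {a : α} {n : ℕ} (ha : a ∈ l)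
    (hn : a ∉ l.take n) : (l.take n).length = n := by
  rw [length_take, Nat.min_eq_left]
  by_contra! hlt
  exact hn (by rwa [take_of_length_le hlt.le])

theorem take_filter_eq_of_notMem_take {p p' : α → Bool} {a : α} (hpa : p a)
    (hp : ∀ x, x ≠ a → p' x = p x) {l : List α} {n : ℕ} (h : a ∉ (l.filter p).take n) :
    (l.filter p').take n = (l.filter p).take n := by
  induction l generalizing n with
  | nil => rfl
  | cons x l ih =>
    rcases n with _ | n
    · simp
    by_cases hxa : x = a
    · subst hxa
      simp [hpa] at h
    · rw [filter_cons, filter_cons, hp x hxa] at *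
      split_ifs at * with hx
      · rw [take_succ_cons, take_succ_cons, ih (fun h' => h (mem_cons_of_mem _ h'))]
      · exact ih h

variable [BEq α] [LawfulBEq α]

theorem idxOf_lt_idxOf_of_append_sublist {l₁ l₂ l : List α} {a b : α} (h : l₁ ++ l₂ <+ l)
    (hl : l.Nodup) (ha : a ∈ l₁) (hb : b ∈ l₂) : l.idxOf a < l.idxOf b := by
  obtain ⟨r₁, r₂, rfl, h₁, h₂⟩ := append_sublist_iff.1 h
  have hb₁ : b ∉ r₁ := fun hb₁ => disjoint_of_nodup_append hl hb₁ (h₂.subset hb)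
  rw [idxOf_append_of_mem (h₁.subset ha), idxOf_append_of_notMem hb₁]
  exact (idxOf_lt_length_of_mem (h₁.subset ha)).trans_le (Nat.le_add_right _ _)

end List

namespace SchoolChoice

section Preferences

variable {S : Type*}

theorem acceptables_cons_some (s : S) (p : List (Option S)) :
    acceptables (some s :: p) = s :: acceptables p := by
  simp [acceptables]

variable [DecidableEq S]

theorem acceptables_truncate (p : List (Option S)) (k : ℕ) :
    acceptables (truncate p k) = (acceptables p).take k := by
  unfold truncate acceptables
  rw [List.takeWhile_append_of_pos (by grind), List.takeWhile_cons_of_neg (by simp),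
    List.append_nil, List.filterMap_map]
  exact List.filterMap_some

theorem idxOf_some_lt_idxOf_none {p : List (Option S)} {s : S} (hs : s ∈ acceptables p) :
    p.idxOf (some s) < p.idxOf none := by
  have hmem : some s ∈ p.takeWhile Option.isSome := by
    obtain ⟨x, hx, rfl : x = some s⟩ := List.mem_filterMap.1 hs
    exact hx
  have hnone : none ∉ p.takeWhile Option.isSome := fun h => by
    simpa using List.mem_takeWhile_imp h
  calc p.idxOf (some s) = (p.takeWhile Option.isSome).idxOf (some s) :=
        ((List.takeWhile_prefix _).idxOf_eq_of_mem hmem).symm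
    _ < (p.takeWhile Option.isSome).length := List.idxOf_lt_length_of_mem hmem
    _ = (p.takeWhile Option.isSome).idxOf none := (List.idxOf_of_notMem hnone).symm
    _ ≤ p.idxOf none := (List.takeWhile_prefix _).idxOf_le _

theorem ValidPref.cons_erase {p : List (Option S)} (hp : ValidPref p) (x : Option S) :
    ValidPref (x :: p.erase x) := by
  refine ⟨List.nodup_cons.2 ⟨fun h => (hp.1.mem_erase_iff.1 h).1 rfl, hp.1.erase x⟩, fun y => ?_⟩
  rcases eq_or_ne y x with rfl | hy
  · exact List.mem_cons_self
  · exact List.mem_cons_of_mem _ (hp.1.mem_erase_iff.2 ⟨hy, hp.2 y⟩)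

end Preferences

section Boston

variable {I S : Type*} [Fintype I] [DecidableEq I] [DecidableEq S]
  (P : I → List (Option S)) (prio : S → List I) (q : S → ℕ)

def firstApplicants (s : S) : List I :=
  (prio s).filter (fun m => (acceptables (P m))[0]? = some s)

theorem card_filter_eq_length_of_iff {T : List I} (hT : T.Nodup) {f : I → Prop}
    [DecidablePred f] (h : ∀ j, f j ↔ j ∈ T) : (Finset.univ.filter f).card = T.length := by
  rw [← List.toFinset_card_of_nodup hT]
  congr 1
  ext j
  simp [h]

theorem bostonRound_eq_some_iff {μ : I → Option S} {t : ℕ} {j : I} {s : S} :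
    bostonRound P prio q μ t j = some s ↔
      μ j = some s ∨ j ∈ ((prio s).filter
        (fun m => decide (μ m = none ∧ (acceptables (P m))[t]? = some s))).take
          (q s - (Finset.univ.filter (fun m => μ m = some s)).card) := by
  have happlicant : j ∈ ((prio s).filter
      (fun m => decide (μ m = none ∧ (acceptables (P m))[t]? = some s))).take
        (q s - (Finset.univ.filter (fun m => μ m = some s)).card) →
      μ j = none ∧ (acceptables (P j))[t]? = some s := fun h => by
    simpa using List.of_mem_filter (List.mem_of_mem_take h)
  unfold bostonRound
  rcases hμ : μ j with _ | s'
  · rcases hg : (acceptables (P j))[t]? with _ | s'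
    · simp_all
    · by_cases hs : s' = s
      · subst hs; simp
      · simp_all
  · simp_all

theorem bostonRound_of_eq_some {μ : I → Option S} {j : I} {s : S} (h : μ j = some s) (t : ℕ) :
    bostonRound P prio q μ t j = some s :=
  (bostonRound_eq_some_iff P prio q).2 (Or.inl h)

theorem bostonRound_eq_some_iff_of_card_eq {μ : I → Option S} {s : S}
    (hs : (Finset.univ.filter (fun m => μ m = some s)).card = q s) (t : ℕ) (j : I) :
    bostonRound P prio q μ t j = some s ↔ μ j = some s := by
  simp [bostonRound_eq_some_iff, hs]

theorem bostonRound_mem_acceptables {μ : I → Option S} {t : ℕ} {j : I} {s : S}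
    (h : bostonRound P prio q μ t j = some s) : μ j = some s ∨ s ∈ acceptables (P j) := by
  refine ((bostonRound_eq_some_iff P prio q).1 h).imp_right fun hj => ?_
  have hget := List.of_mem_filter (List.mem_of_mem_take hj)
  simp only [decide_eq_true_eq] at hget
  exact List.mem_of_getElem? hget.2

theorem bostonRound_none_zero_eq_some_iff {j : I} {s : S} :
    bostonRound P prio q (fun _ => none) 0 j = some s ↔
      j ∈ (firstApplicants P prio s).take (q s) := by
  simp [bostonRound_eq_some_iff, firstApplicants]

theorem foldl_bostonRound_of_eq_some (ts : List ℕ) {μ : I → Option S} {j : I} {s : S}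
    (h : μ j = some s) : ts.foldl (bostonRound P prio q) μ j = some s := by
  induction ts generalizing μ with
  | nil => exact h
  | cons t ts ih => exact ih (bostonRound_of_eq_some P prio q h t)

theorem foldl_bostonRound_eq_some_iff_of_card_eq (ts : List ℕ) {μ : I → Option S} {s : S}
    (hs : (Finset.univ.filter (fun m => μ m = some s)).card = q s) (j : I) :
    ts.foldl (bostonRound P prio q) μ j = some s ↔ μ j = some s := by
  induction ts generalizing μ with
  | nil => rfl
  | cons t ts ih =>
    have hround := bostonRound_eq_some_iff_of_card_eq P prio q hs t
    rw [List.foldl_cons, ih (by simpa only [hround] using hs), hround]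

theorem foldl_bostonRound_mem_acceptables (ts : List ℕ) {μ : I → Option S}
    (hμ : ∀ j s, μ j = some s → s ∈ acceptables (P j)) (j : I) (s : S)
    (h : ts.foldl (bostonRound P prio q) μ j = some s) : s ∈ acceptables (P j) := by
  induction ts generalizing μ with
  | nil => exact hμ j s h
  | cons t ts ih =>
    exact ih (fun j s h => (bostonRound_mem_acceptables P prio q h).elim (hμ j s) id) h

variable [Fintype S]

theorem exists_boston_eq_foldl_bostonRound_zero [Nonempty S] :
    ∃ ts : List ℕ, Boston P prio q =
      ts.foldl (bostonRound P prio q) (bostonRound P prio q (fun _ => none) 0) := by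
  obtain ⟨n, hn⟩ := Nat.exists_eq_succ_of_ne_zero (Fintype.card_ne_zero (α := S))
  exact ⟨(List.range n).map Nat.succ, by rw [Boston, hn, List.range_succ_eq_map, List.foldl_cons]⟩

theorem boston_mem_acceptables {j : I} {s : S} (h : Boston P prio q j = some s) :
    s ∈ acceptables (P j) :=
  foldl_bostonRound_mem_acceptables P prio q _ (by simp) j s h

theorem boston_eq_some_of_mem_take_firstApplicants {j : I} {s : S}
    (h : j ∈ (firstApplicants P prio s).take (q s)) : Boston P prio q j = some s := by
  have : Nonempty S := ⟨s⟩
  obtain ⟨ts, hts⟩ := exists_boston_eq_foldl_bostonRound_zero P prio q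
  rw [hts]
  exact foldl_bostonRound_of_eq_some P prio q ts ((bostonRound_none_zero_eq_some_iff P prio q).2 h)

theorem boston_eq_some_iff_of_length_take_firstApplicants {s : S} (hprio : (prio s).Nodup)
    (hlen : ((firstApplicants P prio s).take (q s)).length = q s) (j : I) :
    Boston P prio q j = some s ↔ j ∈ (firstApplicants P prio s).take (q s) := by
  have : Nonempty S := ⟨s⟩
  obtain ⟨ts, hts⟩ := exists_boston_eq_foldl_bostonRound_zero P prio q
  have hnodup : ((firstApplicants P prio s).take (q s)).Nodup :=
    ((List.take_sublist _ _).trans List.filter_sublist).nodup hprio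
  have hfull := card_filter_eq_length_of_iff hnodup
    (fun m => bostonRound_none_zero_eq_some_iff P prio q (j := m) (s := s))
  rw [hts, foldl_bostonRound_eq_some_iff_of_card_eq P prio q ts (hfull.trans hlen),
    bostonRound_none_zero_eq_some_iff]

end Boston

variable {I S : Type*} [Fintype I] [DecidableEq I] [Fintype S] [DecidableEq S]

theorem bostonk_mem_acceptables {k : ℕ} {P : I → List (Option S)} {prio : S → List I}
    {q : S → ℕ} {j : I} {s : S} (h : Bostonk k P prio q j = some s) : s ∈ acceptables (P j) := by
  have h' := boston_mem_acceptables _ prio q h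
  rw [acceptables_truncate] at h'
  exact List.mem_of_mem_take h'

theorem individuallyRational_bostonk (k : ℕ) (P : I → List (Option S)) (prio : S → List I)
    (q : S → ℕ) : IndividuallyRational P (Bostonk k P prio q) := by
  intro i h
  rcases hμ : Bostonk k P prio q i with _ | s <;> rw [hμ] at h
  · exact lt_irrefl _ h
  · exact (idxOf_some_lt_idxOf_none (bostonk_mem_acceptables hμ)).asymm h

theorem not_blocks_bostonk_of_not_manipulatingStudent {k : ℕ} (hk : 0 < k)
    {P : I → List (Option S)} {prio : S → List I} {q : S → ℕ} {i : I}
    (hPi : ValidPref (P i)) (hprio : ∀ s, ValidPrio (prio s))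
    (hi : ¬ ManipulatingStudent (fun R => Bostonk k R prio q) P i) (s : S) :
    ¬ Blocks P prio q (Bostonk k P prio q) i s := by
  rintro ⟨hpref, hblock⟩
  set Q := some s :: (P i).erase (some s)
  set A := firstApplicants (fun m => truncate (Function.update P i Q m) k) prio s
  by_cases hiT : i ∈ A.take (q s)
  · have hdev : Bostonk k (Function.update P i Q) prio q i = some s :=
      boston_eq_some_of_mem_take_firstApplicants _ prio q hiT
    exact hi ⟨Q, hPi.cons_erase _, by simpa only [hdev] using hpref⟩
  have hiQ : (acceptables (truncate Q k))[0]? = some s := by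
    rw [acceptables_truncate, acceptables_cons_some, List.getElem?_take_of_lt hk]
    rfl
  have hiA : i ∈ A := List.mem_filter.2 ⟨(hprio s).2 i, by simpa using hiQ⟩
  have hA : (firstApplicants (fun m => truncate (P m) k) prio s).take (q s) = A.take (q s) :=
    List.take_filter_eq_of_notMem_take (by simpa using hiQ)
      (fun m hm => by simp [Function.update_of_ne hm]) hiT
  have hlen : (A.take (q s)).length = q s := List.length_take_of_mem_of_notMem_take hiA hiT
  have hμ : ∀ j, Bostonk k P prio q j = some s ↔ j ∈ A.take (q s) := by
    rw [← hA] at hlen ⊢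
    exact boston_eq_some_iff_of_length_take_firstApplicants _ prio q (hprio s).1 hlen
  rcases hblock with hfree | ⟨j, hj, hij⟩
  · have hnodup : (A.take (q s)).Nodup :=
      ((List.take_sublist _ _).trans List.filter_sublist).nodup (hprio s).1
    rw [card_filter_eq_length_of_iff hnodup hμ, hlen] at hfree
    exact lt_irrefl _ hfree
  · have hiD : i ∈ A.drop (q s) :=
      (List.mem_append.1 (by rwa [List.take_append_drop])).resolve_left hiT
    refine (List.idxOf_lt_idxOf_of_append_sublist ?_ (hprio s).1 ((hμ j).1 hj) hiD).asymm hij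
    rw [List.take_append_drop]
    exact List.filter_sublist

theorem bostonk_not_manipulable_implies_stable_general
    {I S : Type*} [Fintype I] [DecidableEq I] [Fintype S] [DecidableEq S]
    (P : I → List (Option S)) (prio : S → List I) (q : S → ℕ)
    (hP : ∀ i, ValidPref (P i)) (hprio : ∀ s, ValidPrio (prio s))
    (k : ℕ) (hk : 1 < k)
    (hnm : NotManipulable (fun R => Bostonk k R prio q) P) :
    IsStable P prio q (Bostonk k P prio q) :=
  ⟨individuallyRational_bostonk k P prio q, fun i ⟨s, hs⟩ =>
    not_blocks_bostonk_of_not_manipulatingStudent (by omega) (hP i) hprio (hnm i) s hs⟩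

/-- Corollary 1(i): for `k > 1`, if the constrained Boston mechanism
`β^k` is not manipulable at `(P,≻,q)` then `β^k(P,≻,q)` is stable at `(P,≻,q)`. -/
theorem bostonk_not_manipulable_implies_stable
    {I S : Type*} [Fintype I] [DecidableEq I] [Fintype S] [DecidableEq S]
    (hIS : Fintype.card S < Fintype.card I)
    (P : I → List (Option S)) (prio : S → List I) (q : S → ℕ)
    (hP : ∀ i, ValidPref (P i)) (hprio : ∀ s, ValidPrio (prio s))
    (k : ℕ) (hk : 1 < k)
    (hnm : NotManipulable (fun R => Bostonk k R prio q) P) :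
    IsStable P prio q (Bostonk k P prio q) :=
  bostonk_not_manipulable_implies_stable_general P prio q hP hprio k hk hnm

end SchoolChoice
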